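/- In the abstract failure-localization model (N a finite node set, P a family of node sets as paths, k-identifiability of S ⊆ N as defined), the set S''(k) := { v ∈ N : for every F ⊆ N with v ∉ F and |F| ≤ k, there exists p ∈ P with v ∈ p and p ∩ F = ∅ } is itself k-identifiable. -/

import Mathlib

/-!
If `F₁ ∩ S''` and `F₂ ∩ S''` differ, some `v ∈ S''` fails in one set, say `F₁`, but not in
`F₂`. By definition of `S''` there is a path through `v` avoiding `F₂`; it meets `F₁` at `v`,
so it fails under `F₁` and not under `F₂`.
-/

variable {V : Type*} [DecidableEq V]

/-- A set `S` of non-monitors is `k`-identifiable: any two failure sets of size at most `k`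
that differ within `S` are distinguished by the failure state of some path. -/
def kIdent (N : Finset V) (P : Set (Finset V)) (S : Finset V) (k : ℕ) : Prop :=
  ∀ F₁ F₂ : Finset V, F₁ ⊆ N → F₂ ⊆ N → F₁.card ≤ k → F₂.card ≤ k →
    F₁ ∩ S ≠ F₂ ∩ S → ∃ p ∈ P, Xor' (p ∩ F₁ = ∅) (p ∩ F₂ = ∅)

theorem xor_inter_eq_empty_of_mem {p F₁ F₂ : Finset V} {v : V} (hvp : v ∈ p) (hv₁ : v ∈ F₁)
    (hp₂ : p ∩ F₂ = ∅) : Xor (p ∩ F₁ = ∅) (p ∩ F₂ = ∅) :=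
  Or.inr ⟨hp₂, Finset.nonempty_iff_ne_empty.1 ⟨v, Finset.mem_inter.2 ⟨hvp, hv₁⟩⟩⟩

theorem kIdent_of_forall_mem_sdiff {N S : Finset V} {P : Set (Finset V)} {k : ℕ}
    (h : ∀ F₁ F₂ : Finset V, F₂ ⊆ N → F₂.card ≤ k → ∀ v ∈ S, v ∈ F₁ → v ∉ F₂ →
      ∃ p ∈ P, Xor (p ∩ F₁ = ∅) (p ∩ F₂ = ∅)) :
    kIdent N P S k := by
  intro F₁ F₂ h₁ h₂ hk₁ hk₂ hne
  wlog hsub : ¬F₁ ∩ S ⊆ F₂ ∩ S generalizing F₁ F₂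
  · have hsub' : ¬F₂ ∩ S ⊆ F₁ ∩ S := fun h => hne (subset_antisymm (not_not.1 hsub) h)
    obtain ⟨p, hp, hsep⟩ := this F₂ F₁ h₂ h₁ hk₂ hk₁ hne.symm hsub'
    exact ⟨p, hp, Eq.mp (xor_comm _ _) hsep⟩
  obtain ⟨v, hv, hvn⟩ := Finset.not_subset.1 hsub
  obtain ⟨hv₁, hvS⟩ := Finset.mem_inter.1 hv
  exact h F₁ F₂ h₂ hk₂ v hvS hv₁ fun hv₂ => hvn (Finset.mem_inter.2 ⟨hv₂, hvS⟩)

theorem Sdoubleprime_identifiable (N S'' : Finset V) (P : Set (Finset V)) (k : ℕ)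
    (hS : ∀ v, v ∈ S'' ↔ v ∈ N ∧
      ∀ F : Finset V, F ⊆ N → v ∉ F → F.card ≤ k → ∃ p ∈ P, v ∈ p ∧ p ∩ F = ∅) :
    kIdent N P S'' k := by
  refine kIdent_of_forall_mem_sdiff fun F₁ F₂ hF₂ hk₂ v hvS hv₁ hv₂ => ?_
  obtain ⟨p, hp, hvp, hp₂⟩ := ((hS v).1 hvS).2 F₂ hF₂ hv₂ hk₂
  exact ⟨p, hp, xor_inter_eq_empty_of_mem hvp hv₁ hp₂⟩
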